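/- Let n ≥ 2 be an integer and let P be a real polynomial of degree at most n that vanishes at each of the integers 1, 2, …, n−1. Writing c_k for the coefficient of t^k in P, the following two identities hold: (−1)^n·c_0 + (n−1)!·c_{n−1} + ((n−1)/2)·n!·c_n = 0, and 24·(n−2)!·c_{n−2} + 12·n·(n−1)!·c_{n−1} + (n+1)(3n−2)·n!·c_n = 0. -/
import Mathlib
open Polynomial

noncomputable def Vm (m : ℕ) : Polynomial ℝ :=
  ∏ j ∈ Finset.range m, (X - C ((j : ℝ) + 1))

lemma Vm_monic (m : ℕ) : (Vm m).Monic :=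
  monic_prod_of_monic _ _ fun _ _ => monic_X_sub_C _

lemma Vm_natDegree (m : ℕ) : (Vm m).natDegree = m := by
  rw [Vm, natDegree_prod _ _ fun i _ => X_sub_C_ne_zero _]
  simp only [natDegree_X_sub_C]
  simp

lemma Vm_succ (m : ℕ) : Vm (m + 1) = Vm m * (X - C ((m : ℝ) + 1)) := by
  rw [Vm, Finset.prod_range_succ]; rfl

lemma coeff_mul_X_sub_C' (p : Polynomial ℝ) (a : ℝ) (k : ℕ) :
    (p * (X - C a)).coeff (k + 1) = p.coeff k - a * p.coeff (k + 1) := by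
  rw [mul_sub, coeff_sub, coeff_mul_X, coeff_mul_C]; ring

lemma Vm_coeff_top (m : ℕ) : (Vm m).coeff m = 1 := by
  have := (Vm_monic m).coeff_natDegree
  rwa [Vm_natDegree] at this

lemma Vm_coeff_zero (m : ℕ) : (Vm m).coeff 0 = (-1) ^ m * m.factorial := by
  induction m with
  | zero => simp [Vm]
  | succ m ih =>
    rw [Vm_succ, mul_coeff_zero, ih]
    simp only [coeff_sub, coeff_X_zero, coeff_C, if_pos rfl]
    push_cast [Nat.factorial_succ, pow_succ]
    ring

lemma Vm_coeff_f1 (m : ℕ) :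
    (Vm (m + 1)).coeff m = -(((m : ℝ) + 1) * ((m : ℝ) + 2)) / 2 := by
  induction m with
  | zero => norm_num [Vm]
  | succ m ih =>
    rw [Vm_succ, coeff_mul_X_sub_C', ih, Vm_coeff_top]
    push_cast
    ring

lemma Vm_coeff_f2 (m : ℕ) :
    (Vm (m + 2)).coeff m =
      ((m : ℝ) + 1) * ((m : ℝ) + 2) * ((m : ℝ) + 3) * (3 * (m : ℝ) + 8) / 24 := by
  induction m with
  | zero =>
    show (Vm 2).coeff 0 = _
    rw [Vm_coeff_zero]
    norm_num [Nat.factorial]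
  | succ m ih =>
    rw [Vm_succ, coeff_mul_X_sub_C', ih, Vm_coeff_f1]
    push_cast
    ring

/-- let n ≥ 2 and let P be a real polynomial of degree at most n
vanishing at each of 1, 2, …, n−1. Writing c_k for the coefficient of t^k in P,
one has (−1)ⁿ·c₀ + (n−1)!·c_{n−1} + ((n−1)/2)·n!·c_n = 0 and
24·(n−2)!·c_{n−2} + 12·n·(n−1)!·c_{n−1} + (n+1)(3n−2)·n!·c_n = 0. -/
theorem coefficient_identities_of_vanishing_polynomial
    (n : ℕ) (hn : 2 ≤ n) (P : Polynomial ℝ) (hdeg : P.natDegree ≤ n)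
    (hroots : ∀ j : ℕ, 1 ≤ j → j ≤ n - 1 → P.eval (j : ℝ) = 0) :
    ((-1 : ℝ) ^ n * P.coeff 0 + (Nat.factorial (n - 1) : ℝ) * P.coeff (n - 1)
        + ((n : ℝ) - 1) / 2 * (Nat.factorial n : ℝ) * P.coeff n = 0) ∧
    (24 * (Nat.factorial (n - 2) : ℝ) * P.coeff (n - 2)
        + 12 * (n : ℝ) * (Nat.factorial (n - 1) : ℝ) * P.coeff (n - 1)
        + ((n : ℝ) + 1) * (3 * (n : ℝ) - 2) * (Nat.factorial n : ℝ) * P.coeff n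
        = 0) := by
  rcases eq_or_ne P 0 with rfl | hP
  · simp
  rcases eq_or_lt_of_le hn with hn2 | hn3
  · -- n = 2
    subst hn2
    have h1 : P.coeff 0 + P.coeff 1 + P.coeff 2 = 0 := by
      have h := hroots 1 le_rfl (by norm_num)
      rw [Polynomial.eval_eq_sum_range' (show P.natDegree < 3 by omega)] at h
      norm_num [Finset.sum_range_succ] at h
      linarith
    norm_num [Nat.factorial]
    constructor <;> linarith
  · -- n ≥ 3
    obtain ⟨m, rfl⟩ : ∃ m, n = m + 3 := ⟨n - 3, by omega⟩
    -- the multiset of roots 1, ..., m+2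
    set s : Multiset ℝ := (Multiset.range (m + 2)).map (fun j : ℕ => ((j : ℝ) + 1)) with hs
    have hnodup : s.Nodup := by
      refine (Multiset.nodup_range _).map ?_
      intro a b hab
      simp only [add_left_inj, Nat.cast_inj] at hab
      exact hab
    have hsub : s ⊆ P.roots := by
      intro a ha
      obtain ⟨j, hj, rfl⟩ := Multiset.mem_map.mp ha
      rw [Multiset.mem_range] at hj
      rw [Polynomial.mem_roots hP]
      have := hroots (j + 1) (by omega) (by omega)
      simpa [Polynomial.IsRoot] using this
    have hle : s ≤ P.roots := (Multiset.le_iff_subset hnodup).mpr hsub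
    obtain ⟨Q, hPQ⟩ := (Multiset.prod_X_sub_C_dvd_iff_le_roots hP s).mpr hle
    have hVs : (s.map fun a => Polynomial.X - Polynomial.C a).prod = Vm (m + 2) := by
      rw [hs, Multiset.map_map, Vm, Finset.prod_eq_multiset_prod, Finset.range_val]
      rfl
    rw [hVs] at hPQ
    have hQ0 : Q ≠ 0 := by
      rintro rfl; rw [mul_zero] at hPQ; exact hP hPQ
    have hdQ : Q.natDegree ≤ 1 := by
      have h1 := Polynomial.natDegree_mul ((Vm_monic (m + 2)).ne_zero) hQ0
      rw [← hPQ, Vm_natDegree] at h1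
      omega
    set q := Q.coeff 1 with hq
    set b := Q.coeff 0 with hb
    have hQeq : Q = Polynomial.C q * Polynomial.X + Polynomial.C b :=
      Polynomial.eq_X_add_C_of_natDegree_le_one hdQ
    have hP' : P = Vm (m + 2) * Polynomial.C q * Polynomial.X + Vm (m + 2) * Polynomial.C b := by
      rw [hPQ, hQeq]; ring
    have hcoeff : ∀ k : ℕ, P.coeff (k + 1) = q * (Vm (m + 2)).coeff k
        + b * (Vm (m + 2)).coeff (k + 1) := by
      intro k
      rw [hP', Polynomial.coeff_add, Polynomial.coeff_mul_X, Polynomial.coeff_mul_C,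
        Polynomial.coeff_mul_C]
      ring
    have hc0 : P.coeff 0 = b * ((-1) ^ (m + 2) * (m + 2).factorial) := by
      rw [hP', Polynomial.coeff_add, Polynomial.coeff_mul_X_zero, Polynomial.coeff_mul_C,
        Vm_coeff_zero]
      ring
    have htop : (Vm (m + 2)).coeff (m + 3) = 0 :=
      Polynomial.coeff_eq_zero_of_natDegree_lt (by rw [Vm_natDegree]; omega)
    have hcn : P.coeff (m + 3) = q := by
      rw [show m + 3 = (m + 2) + 1 from rfl, hcoeff, Vm_coeff_top,
        show (m + 2) + 1 = m + 3 from rfl, htop]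
      ring
    have hcn1 : P.coeff (m + 2) = q * (-(((m : ℝ) + 2) * ((m : ℝ) + 3)) / 2) + b := by
      rw [show m + 2 = (m + 1) + 1 from rfl, hcoeff,
        show (m + 1) + 1 = m + 2 from rfl, Vm_coeff_top,
        show m + 1 = (m + 1) from rfl]
      have := Vm_coeff_f1 (m + 1)
      rw [show (m + 1) + 1 = m + 2 from rfl] at this
      rw [this]
      push_cast; ring
    have hcn2 : P.coeff (m + 1) = q * (((m : ℝ) + 1) * ((m : ℝ) + 2) * ((m : ℝ) + 3)
        * (3 * (m : ℝ) + 8) / 24) + b * (-(((m : ℝ) + 2) * ((m : ℝ) + 3)) / 2) := by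
      rw [show m + 1 = m + 1 from rfl, hcoeff m, Vm_coeff_f2]
      have := Vm_coeff_f1 (m + 1)
      rw [show (m + 1) + 1 = m + 2 from rfl] at this
      rw [this]
      push_cast; ring
    have hsub1 : m + 3 - 1 = m + 2 := rfl
    have hsub2 : m + 3 - 2 = m + 1 := rfl
    rw [hsub1, hsub2, hc0, hcn, hcn1, hcn2]
    have hfac2 : ((m + 2).factorial : ℝ) = ((m : ℝ) + 2) * (m + 1).factorial := by
      rw [show m + 2 = (m + 1) + 1 from rfl, Nat.factorial_succ]; push_cast; ring
    have hfac3 : ((m + 3).factorial : ℝ) = ((m : ℝ) + 3) * ((m : ℝ) + 2) * (m + 1).factorial := by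
      rw [show m + 3 = (m + 2) + 1 from rfl, Nat.factorial_succ]; push_cast [hfac2]; ring
    have hE : ((-1 : ℝ)) ^ (m + 3) * (-1) ^ (m + 2) = -1 := by
      rw [← pow_add, show m + 3 + (m + 2) = 2 * (m + 2) + 1 by ring, pow_succ, pow_mul]
      norm_num
    constructor
    · push_cast [hfac2, hfac3]
      linear_combination (b * ((m : ℝ) + 2) * (m + 1).factorial) * hE
    · push_cast [hfac2, hfac3]
      ring
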